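/- With the above notation for the case 𝔤 = 𝔰𝔬(2r+1,2r+1), let m = (m_1,…,m_r) be a dominant tuple of integers. If m_r ≥ 1 then C(m) = 1/(2r+1), and if m_r = 0 then C(m) = 0. In particular C(m) = 0 if and only if m_r = 0. -/

import Mathlib

/-
Write `x k = m k + ρ k`. For `b = d = 2`, `e = 0` one has `p / (2n) = 1 / (2r + 1)`, and
`(2r + 1) A(m, k)`, `(2r + 1) B(m, k)` are the residues at `z = x k` and `z = -x k` of
  `G(z) = (z + 1) ∏ⱼ (z - x j + 1) (z + x j + 1) / ((z + 1/2) ∏ⱼ (z - x j) (z + x j))`.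
The residues of `G` add up to its `1/z`-coefficient at infinity, `2r + 1/2` (Lagrange
interpolation). If `m_r ≥ 1`, all `x k ≥ 3/2`, the pole `-1/2` has residue `1/2`, and
`∑ A + ∑ B = 2r / (2r + 1)`. If `m_r = 0`, then `x_r = 1/2`: the poles `-1/2` and `-x_r` merge
into one with residue `-1/2`, and `∑ A + ∑_{k < r} B = 1`. The coefficients that `C(m)` omits
because `m ± e_k` is not dominant vanish anyway: then `x_{k ∓ 1} = x k ± 1`, which kills a
factor of the product.
-/

open Finset

/-- A tuple of integers is dominant if its entries are weakly decreasing and nonnegative. -/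
def Dominant {r : ℕ} (m : Fin r → ℤ) : Prop :=
  (∀ j k : Fin r, j ≤ k → m k ≤ m j) ∧ ∀ j : Fin r, 0 ≤ m j

instance {r : ℕ} (m : Fin r → ℤ) : Decidable (Dominant m) := by
  unfold Dominant; infer_instance

/-- The genus `p = (e+1) + (r-1)d + b/2`. -/
noncomputable def genusP (r : ℕ) (b d e : ℝ) : ℝ := (e + 1) + ((r : ℝ) - 1) * d + b / 2

/-- `n = r(p + b/2)`. -/
noncomputable def dimN (r : ℕ) (b d e : ℝ) : ℝ := r * (genusP r b d e + b / 2)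

/-- `ρ_k = (r-k)d/2 + e/2 + b/4` (1-indexed `k`). -/
noncomputable def rho (r : ℕ) (b d e : ℝ) (k : Fin r) : ℝ :=
  ((r : ℝ) - ((k : ℕ) + 1)) * d / 2 + e / 2 + b / 4

/-- The coefficient `A(m,k)`. -/
noncomputable def Acoef (r : ℕ) (b d e : ℝ) (m : Fin r → ℤ) (k : Fin r) : ℝ :=
  (genusP r b d e / (2 * dimN r b d e)) *
    ((2 * ((m k : ℝ) + rho r b d e k) + b / 2 + 1) *
        (2 * ((m k : ℝ) + rho r b d e k) + b / 2 + e)) /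
      ((2 * ((m k : ℝ) + rho r b d e k)) * (2 * ((m k : ℝ) + rho r b d e k) + 1)) *
    ∏ j ∈ univ.erase k,
      ((((m k : ℝ) + rho r b d e k) - ((m j : ℝ) + rho r b d e j) + d / 2) *
          (((m k : ℝ) + rho r b d e k) + ((m j : ℝ) + rho r b d e j) + d / 2)) /
        ((((m k : ℝ) + rho r b d e k) - ((m j : ℝ) + rho r b d e j)) *
          (((m k : ℝ) + rho r b d e k) + ((m j : ℝ) + rho r b d e j)))

/-- The coefficient `B(m,k)`. -/
noncomputable def Bcoef (r : ℕ) (b d e : ℝ) (m : Fin r → ℤ) (k : Fin r) : ℝ :=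
  (genusP r b d e / (2 * dimN r b d e)) *
    ((2 * ((m k : ℝ) + rho r b d e k) - b / 2 - 1) *
        (2 * ((m k : ℝ) + rho r b d e k) - b / 2 - e)) /
      ((2 * ((m k : ℝ) + rho r b d e k)) * (2 * ((m k : ℝ) + rho r b d e k) - 1)) *
    ∏ j ∈ univ.erase k,
      ((((m k : ℝ) + rho r b d e k) + ((m j : ℝ) + rho r b d e j) - d / 2) *
          (((m k : ℝ) + rho r b d e k) - ((m j : ℝ) + rho r b d e j) - d / 2)) /
        ((((m k : ℝ) + rho r b d e k) + ((m j : ℝ) + rho r b d e j)) *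
          (((m k : ℝ) + rho r b d e k) - ((m j : ℝ) + rho r b d e j)))

/-- The coefficient `C(m)`. -/
noncomputable def Ccoef (r : ℕ) (b d e : ℝ) (m : Fin r → ℤ) : ℝ :=
  1 - (∑ k ∈ univ.filter (fun k : Fin r =>
        Dominant (fun j => m j + if j = k then 1 else 0)), Acoef r b d e m k)
    - (∑ k ∈ univ.filter (fun k : Fin r =>
        Dominant (fun j => m j - if j = k then 1 else 0)), Bcoef r b d e m k)

open Function

section EraseSum

variable {α β M : Type*} [CommMonoid M] [Fintype α] [Fintype β]
  [DecidableEq α] [DecidableEq β]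

@[to_additive]
theorem Fintype.prod_erase_inl (f : α ⊕ β → M) (a : α) :
    ∏ j ∈ univ.erase (Sum.inl a), f j =
      (∏ j ∈ univ.erase a, f (Sum.inl j)) * ∏ j, f (Sum.inr j) := by
  rw [show univ.erase (Sum.inl a) = (univ.erase a).disjSum univ by ext (j | j) <;> simp,
    prod_disjSum]

@[to_additive]
theorem Fintype.prod_erase_inr (f : α ⊕ β → M) (b : β) :
    ∏ j ∈ univ.erase (Sum.inr b), f j =
      (∏ j, f (Sum.inl j)) * ∏ j ∈ univ.erase b, f (Sum.inr j) := by
  rw [show univ.erase (Sum.inr b) = univ.disjSum (univ.erase b) by ext (j | j) <;> simp,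
    prod_disjSum]

theorem Fintype.prod_erase_some (f : Option α → M) (a : α) :
    ∏ j ∈ univ.erase (some a), f j = f none * ∏ j ∈ univ.erase a, f (some j) := by
  rw [show univ.erase (some a) = insertNone (univ.erase a) by ext (_ | j) <;> simp,
    prod_insertNone]

theorem Fintype.prod_erase_none (f : Option α → M) :
    ∏ j ∈ univ.erase none, f j = ∏ j, f (some j) := by
  rw [show univ.erase none = univ.map Embedding.some by ext (_ | j) <;> simp, prod_map]
  rfl

end EraseSum

theorem prod_erase_sub_ne_zero {F ι : Type*} [Field F] [Fintype ι] [DecidableEq ι] {y : ι → F}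
    (hy : Injective y) (i : ι) : ∏ j ∈ univ.erase i, (y i - y j) ≠ 0 :=
  prod_ne_zero_iff.2 fun _ hj => sub_ne_zero.2 fun h => ne_of_mem_erase hj (hy h).symm

theorem prod_sub_update {F ι : Type*} [CommRing F] [Fintype ι] [DecidableEq ι] (g : ι → F)
    (a : ι) (b t : F) :
    ∏ j, (t - update g a b j) = (t - b) * ∏ j ∈ univ.erase a, (t - g j) := by
  rw [← mul_prod_erase univ _ (mem_univ a), update_self]
  exact congrArg _ (prod_congr rfl fun j hj => by rw [update_of_ne (ne_of_mem_erase hj)])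

section Residues

open Polynomial Lagrange

theorem Lagrange.coeff_nodal_card_sub_one {F ι : Type*} [CommRing F] [Nontrivial F]
    (s : Finset ι) (hs : s.Nonempty) (v : ι → F) :
    (nodal s v).coeff (#s - 1) = -∑ i ∈ s, v i := by
  rw [← prod_X_sub_C_nextCoeff, ← nodal_eq,
    nextCoeff_of_natDegree_pos (by rw [natDegree_nodal]; exact hs.card_pos), natDegree_nodal]

/-- The residues of `∏ (z - w j) / ∏ (z - y j)` add up to its `1/z`-coefficient at infinity. -/
theorem sum_prod_sub_div_prod_erase_sub {F ι : Type*} [Field F] [Fintype ι] [DecidableEq ι]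
    {y : ι → F} (hy : Injective y) (w : ι → F) :
    ∑ i, (∏ j, (y i - w j)) / ∏ j ∈ univ.erase i, (y i - y j) =
      ∑ j, y j - ∑ j, w j := by
  rcases isEmpty_or_nonempty ι with hι | hι
  · simp
  have hdeg : (nodal univ w - nodal univ y).degree < #(univ : Finset ι) := by
    rw [← degree_nodal (v := w)]
    exact degree_sub_lt_left (by rw [degree_nodal, degree_nodal]) nodal_ne_zero
      (nodal_monic.leadingCoeff.trans nodal_monic.leadingCoeff.symm)
  rw [← neg_sub_neg, ← coeff_nodal_card_sub_one _ univ_nonempty,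
    ← coeff_nodal_card_sub_one _ univ_nonempty, ← coeff_sub, coeff_eq_sum hy.injOn hdeg]
  simp [eval_nodal_at_node, eval_nodal]

end Residues

section PoleResidue

variable {r : ℕ}

def plusMinus (x : Fin r → ℝ) : Fin r ⊕ Fin r → ℝ := Sum.elim x fun j => -x j

/-- The residue at a pole `t = ± x k` of
`(z + 1) ∏ⱼ (z - x j + 1) (z + x j + 1) / ((z + 1/2) ∏ⱼ (z - x j) (z + x j))`. -/
noncomputable def poleResidue (x : Fin r → ℝ) (k : Fin r) (t : ℝ) : ℝ :=
  (t + 1) / t * ∏ j ∈ univ.erase k, ((t - x j + 1) * (t + x j + 1)) / ((t - x j) * (t + x j))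

theorem residue_eq_poleResidue (x : Fin r → ℝ) (i : Fin r ⊕ Fin r) (h0 : plusMinus x i ≠ 0)
    (h1 : 2 * plusMinus x i + 1 ≠ 0) :
    (plusMinus x i + 1) * (∏ j, (plusMinus x i - (plusMinus x j - 1))) /
        ((plusMinus x i + 1 / 2) * ∏ j ∈ univ.erase i, (plusMinus x i - plusMinus x j)) =
      poleResidue x (i.elim id id) (plusMinus x i) := by
  have h2 : plusMinus x i + 1 / 2 ≠ 0 := by contrapose! h1; linarith
  have hscalar : (plusMinus x i + 1) / plusMinus x i = (plusMinus x i + 1) *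
      (2 * plusMinus x i + 1) / ((plusMinus x i + 1 / 2) * (2 * plusMinus x i)) := by
    rw [eq_div_iff (by positivity)]
    field_simp
  rw [poleResidue, hscalar]
  rcases i with k | k <;>
  simp only [plusMinus, Sum.elim_inl, Sum.elim_inr, ← sub_add, sub_neg_eq_add,
    Fintype.prod_sum_type, Fintype.prod_erase_inl, Fintype.prod_erase_inr, prod_div_distrib,
    prod_mul_distrib, id] <;>
  rw [← mul_prod_erase univ (fun j => _ - x j + 1) (mem_univ k),
    ← mul_prod_erase univ (fun j => _ + x j + 1) (mem_univ k)]
  · rw [← mul_prod_erase univ (fun j => _ + x j) (mem_univ k), div_mul_div_comm]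
    congr 1 <;> ring
  · rw [← mul_prod_erase univ (fun j => _ - x j) (mem_univ k), div_mul_div_comm]
    congr 1 <;> ring

end PoleResidue

section Coefficients

variable {r : ℕ}

noncomputable def shiftedWeight (m : Fin r → ℤ) (k : Fin r) : ℝ := m k + rho r 2 2 0 k

theorem shiftedWeight_eq (m : Fin r → ℤ) (k : Fin r) :
    shiftedWeight m k = m k + r - k - 1 / 2 := by
  rw [shiftedWeight, rho]
  ring

theorem genusP_div_two_dimN (hr : r ≠ 0) :
    genusP r 2 2 0 / (2 * dimN r 2 2 0) = 1 / (2 * r + 1) := by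
  have : (r : ℝ) ≠ 0 := by exact_mod_cast hr
  rw [dimN, show genusP r 2 2 0 = 2 * r by rw [genusP]; ring]
  field_simp

theorem Acoef_eq_poleResidue (hr : r ≠ 0) (m : Fin r → ℤ) (k : Fin r)
    (hk : 2 * shiftedWeight m k + 1 ≠ 0) :
    Acoef r 2 2 0 m k =
      poleResidue (shiftedWeight m) k (shiftedWeight m k) / (2 * r + 1) := by
  rw [Acoef, genusP_div_two_dimN hr, poleResidue]
  simp only [← shiftedWeight.eq_1]
  set X := shiftedWeight m k
  have hfac :
      (2 * X + 2 / 2 + 1) * (2 * X + 2 / 2 + 0) / (2 * X * (2 * X + 1)) = (X + 1) / X := by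
    rw [show 2 * X + 2 / 2 + 0 = 2 * X + 1 by ring, mul_div_mul_right _ _ hk,
      show 2 * X + 2 / 2 + 1 = 2 * (X + 1) by ring, mul_div_mul_left _ _ two_ne_zero]
  rw [mul_div_assoc, hfac, one_div_mul_eq_div, div_mul_eq_mul_div]
  congr 2
  exact prod_congr rfl fun j _ => by congr 1; ring

theorem Bcoef_eq_poleResidue (hr : r ≠ 0) (m : Fin r → ℤ) (k : Fin r)
    (hk : 2 * shiftedWeight m k - 1 ≠ 0) :
    Bcoef r 2 2 0 m k =
      poleResidue (shiftedWeight m) k (-shiftedWeight m k) / (2 * r + 1) := by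
  rw [Bcoef, genusP_div_two_dimN hr, poleResidue]
  simp only [← shiftedWeight.eq_1]
  set X := shiftedWeight m k
  have hfac : (2 * X - 2 / 2 - 1) * (2 * X - 2 / 2 - 0) / (2 * X * (2 * X - 1)) =
      (-X + 1) / -X := by
    rw [show 2 * X - 2 / 2 - 0 = 2 * X - 1 by ring, mul_div_mul_right _ _ hk,
      show 2 * X - 2 / 2 - 1 = 2 * -(-X + 1) by ring, mul_div_mul_left _ _ two_ne_zero,
      neg_div, div_neg]
  rw [mul_div_assoc, hfac, one_div_mul_eq_div, div_mul_eq_mul_div]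
  congr 2
  exact prod_congr rfl fun j _ => by congr 1 <;> ring

end Coefficients

section Dominance

variable {r : ℕ} {m : Fin r → ℤ}

theorem shiftedWeight_add_one_le (hm : Dominant m) {j k : Fin r} (h : j < k) :
    shiftedWeight m k + 1 ≤ shiftedWeight m j := by
  have hm' : (m k : ℝ) ≤ m j := by exact_mod_cast hm.1 j k h.le
  have hjk : (j : ℝ) + 1 ≤ k := by exact_mod_cast (h : (j : ℕ) < k)
  rw [shiftedWeight_eq, shiftedWeight_eq]
  linarith

theorem shiftedWeight_strictAnti (hm : Dominant m) : StrictAnti (shiftedWeight m) :=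
  fun _ _ h => by linarith [shiftedWeight_add_one_le hm h]

theorem shiftedWeight_last {L : Fin r} (hL : (L : ℕ) + 1 = r) :
    shiftedWeight m L = m L + 1 / 2 := by
  have : (L : ℝ) + 1 = r := by exact_mod_cast hL
  rw [shiftedWeight_eq]
  linarith

theorem shiftedWeight_last_add_one_le (hm : Dominant m) {L : Fin r} (hL : (L : ℕ) + 1 = r)
    {k : Fin r} (hk : k ≠ L) : shiftedWeight m L + 1 ≤ shiftedWeight m k :=
  shiftedWeight_add_one_le hm (lt_of_le_of_ne (Fin.le_def.2 (by omega)) hk)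

theorem exists_pred_eq_of_not_dominant_add (hm : Dominant m) {k : Fin r}
    (h : ¬Dominant fun j => m j + if j = k then 1 else 0) :
    ∃ j : Fin r, (j : ℕ) + 1 = k ∧ m j = m k := by
  by_contra! hne
  refine h ⟨fun a b hab => ?_, fun a => ?_⟩ <;> dsimp only
  swap
  · have := hm.2 a
    split_ifs <;> omega
  have hba := hm.1 a b hab
  by_cases hb : b = k
  · by_cases ha : a = k
    · rw [ha, hb]
    subst hb
    have hlt : (a : ℕ) < b := lt_of_le_of_ne hab (Fin.val_ne_of_ne ha)
    have hap := hm.1 a ⟨b - 1, by omega⟩ (Fin.le_def.2 (by simp; omega))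
    have hpb := hm.1 ⟨b - 1, by omega⟩ b (Fin.le_def.2 (by simp))
    have hne' := hne ⟨b - 1, by omega⟩ (by simp; omega)
    simp only [ha, if_true, if_false]
    omega
  · split_ifs <;> omega

theorem exists_succ_eq_of_not_dominant_sub (hm : Dominant m) {k : Fin r}
    (h : ¬Dominant fun j => m j - if j = k then 1 else 0) (hk : (k : ℕ) + 1 < r ∨ 1 ≤ m k) :
    ∃ j : Fin r, (k : ℕ) + 1 = j ∧ m j = m k := by
  by_contra! hne
  have hmk : 1 ≤ m k := by
    rcases hk with hk | hk
    · have := hm.1 k ⟨k + 1, hk⟩ (Fin.le_def.2 (by simp))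
      have := hm.2 ⟨k + 1, hk⟩
      have := hne ⟨k + 1, hk⟩ rfl
      omega
    · exact hk
  refine h ⟨fun a b hab => ?_, fun a => ?_⟩ <;> dsimp only
  swap
  · have := hm.2 a
    split_ifs with ha
    · rw [ha]; omega
    · omega
  have hba := hm.1 a b hab
  by_cases ha : a = k
  · by_cases hb : b = k
    · rw [ha, hb]
    subst ha
    have hlt : (a : ℕ) < b := lt_of_le_of_ne hab (Fin.val_ne_of_ne (Ne.symm hb))
    have has := hm.1 a ⟨a + 1, by omega⟩ (Fin.le_def.2 (by simp))
    have hsb := hm.1 ⟨a + 1, by omega⟩ b (Fin.le_def.2 (by simp; omega))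
    have hne' := hne ⟨a + 1, by omega⟩ rfl
    simp only [hb, if_true, if_false]
    omega
  · split_ifs <;> omega

end Dominance

section Vanishing

variable {r : ℕ} {m : Fin r → ℤ}

theorem Acoef_eq_zero_of_shiftedWeight_eq {j k : Fin r}
    (h : shiftedWeight m j = shiftedWeight m k + 1) : Acoef r 2 2 0 m k = 0 := by
  have hjk : j ≠ k := by rintro rfl; linarith
  refine mul_eq_zero_of_right _ (prod_eq_zero (mem_erase.2 ⟨hjk, mem_univ j⟩) ?_)
  simp only [← shiftedWeight.eq_1, h]
  rw [show shiftedWeight m k - (shiftedWeight m k + 1) + 2 / 2 = 0 by ring, zero_mul, zero_div]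

theorem Bcoef_eq_zero_of_shiftedWeight_eq {j k : Fin r}
    (h : shiftedWeight m j = shiftedWeight m k - 1) : Bcoef r 2 2 0 m k = 0 := by
  have hjk : j ≠ k := by rintro rfl; linarith
  refine mul_eq_zero_of_right _ (prod_eq_zero (mem_erase.2 ⟨hjk, mem_univ j⟩) ?_)
  simp only [← shiftedWeight.eq_1, h]
  rw [show shiftedWeight m k - (shiftedWeight m k - 1) - 2 / 2 = 0 by ring, mul_zero, zero_div]

theorem Acoef_eq_zero_of_not_dominant (hm : Dominant m) {k : Fin r}
    (h : ¬Dominant fun j => m j + if j = k then 1 else 0) : Acoef r 2 2 0 m k = 0 := by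
  obtain ⟨j, hjk, hmj⟩ := exists_pred_eq_of_not_dominant_add hm h
  refine Acoef_eq_zero_of_shiftedWeight_eq (j := j) ?_
  have : (j : ℝ) + 1 = k := by exact_mod_cast hjk
  rw [shiftedWeight_eq, shiftedWeight_eq, hmj]
  linarith

theorem Bcoef_eq_zero_of_not_dominant (hm : Dominant m) {k : Fin r}
    (h : ¬Dominant fun j => m j - if j = k then 1 else 0) (hk : (k : ℕ) + 1 < r ∨ 1 ≤ m k) :
    Bcoef r 2 2 0 m k = 0 := by
  obtain ⟨j, hkj, hmj⟩ := exists_succ_eq_of_not_dominant_sub hm h hk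
  refine Bcoef_eq_zero_of_shiftedWeight_eq (j := j) ?_
  have : (k : ℝ) + 1 = j := by exact_mod_cast hkj
  rw [shiftedWeight_eq, shiftedWeight_eq, hmj]
  linarith

theorem sum_filter_dominant_Acoef (hm : Dominant m) :
    ∑ k ∈ univ.filter (fun k => Dominant fun j => m j + if j = k then 1 else 0),
      Acoef r 2 2 0 m k = ∑ k, Acoef r 2 2 0 m k :=
  sum_subset (filter_subset _ _) fun k _ hk =>
    Acoef_eq_zero_of_not_dominant hm fun h => hk (mem_filter.2 ⟨mem_univ k, h⟩)

theorem sum_filter_dominant_Bcoef_of_one_le (hm : Dominant m) {L : Fin r}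
    (hL : (L : ℕ) + 1 = r) (hmL : 1 ≤ m L) :
    ∑ k ∈ univ.filter (fun k => Dominant fun j => m j - if j = k then 1 else 0),
      Bcoef r 2 2 0 m k = ∑ k, Bcoef r 2 2 0 m k :=
  sum_subset (filter_subset _ _) fun k _ hk =>
    Bcoef_eq_zero_of_not_dominant hm (fun h => hk (mem_filter.2 ⟨mem_univ k, h⟩))
      (Or.inr (hmL.trans (hm.1 k L (Fin.le_def.2 (by omega)))))

theorem sum_filter_dominant_Bcoef_of_eq_zero (hm : Dominant m) {L : Fin r}
    (hL : (L : ℕ) + 1 = r) (hmL : m L = 0) :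
    ∑ k ∈ univ.filter (fun k => Dominant fun j => m j - if j = k then 1 else 0),
      Bcoef r 2 2 0 m k = ∑ k ∈ univ.erase L, Bcoef r 2 2 0 m k := by
  refine sum_subset (fun k hk => mem_erase.2 ⟨?_, mem_univ k⟩) fun k hk hkf => ?_
  · rintro rfl
    have hnonneg := (mem_filter.1 hk).2.2 k
    simp only [if_true] at hnonneg
    omega
  · refine Bcoef_eq_zero_of_not_dominant hm (fun h => hkf (mem_filter.2 ⟨mem_univ k, h⟩))
      (Or.inl ?_)
    have hkL := Fin.val_ne_of_ne (ne_of_mem_erase hk)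
    omega

end Vanishing

section ResidueSums

variable {r : ℕ} {x : Fin r → ℝ}

theorem plusMinus_injective (hx : Injective x) (hpos : ∀ k, 0 < x k) :
    Injective (plusMinus x) := by
  rintro (j | j) (k | k) h <;> simp only [plusMinus, Sum.elim_inl, Sum.elim_inr] at h
  · rw [hx h]
  · linarith [hpos j, hpos k]
  · linarith [hpos j, hpos k]
  · rw [hx (neg_inj.1 h)]

theorem sum_poleResidue_of_ne_half (hx : Injective x) (hpos : ∀ k, 0 < x k)
    (hhalf : ∀ k, x k ≠ 1 / 2) :
    ∑ k, poleResidue x k (x k) + ∑ k, poleResidue x k (-x k) = 2 * r := by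
  have hpm := plusMinus_injective hx hpos
  have hpm_ne : ∀ i, plusMinus x i ≠ 0 ∧ 2 * plusMinus x i + 1 ≠ 0 := by
    rintro (k | k) <;> simp only [plusMinus, Sum.elim_inl, Sum.elim_inr] <;>
      constructor <;> intro h
    all_goals first | linarith [hpos k] | exact hhalf k (by linarith)
  set y : Option (Fin r ⊕ Fin r) → ℝ := fun o => o.elim (-(1 / 2)) (plusMinus x)
  set w : Option (Fin r ⊕ Fin r) → ℝ := fun o => o.elim (-1) fun i => plusMinus x i - 1
  have hy : Injective y := by
    rintro (_ | i) (_ | j) h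
    · rfl
    · change -(1 / 2) = plusMinus x j at h
      exact absurd (by linarith) (hpm_ne j).2
    · change plusMinus x i = -(1 / 2) at h
      exact absurd (by linarith) (hpm_ne i).2
    · exact congrArg some (hpm h)
  have key := sum_prod_sub_div_prod_erase_sub hy w
  have hnone : (∏ j, (y none - w j)) / ∏ j ∈ univ.erase none, (y none - y j) = 1 / 2 := by
    have hden := prod_erase_sub_ne_zero hy none
    rw [Fintype.prod_erase_none] at hden ⊢
    rw [Fintype.prod_option, div_eq_iff hden]
    simp only [y, w, Option.elim, Fintype.prod_sum_type, plusMinus, Sum.elim_inl, Sum.elim_inr,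
      ← prod_mul_distrib]
    rw [show -(1 / 2) - -1 = (1 / 2 : ℝ) by norm_num]
    exact congrArg _ (prod_congr rfl fun j _ => by ring)
  have hsome : ∀ i, (∏ j, (y (some i) - w j)) /
      ∏ j ∈ univ.erase (some i), (y (some i) - y j) =
        poleResidue x (i.elim id id) (plusMinus x i) := by
    intro i
    rw [Fintype.prod_option, Fintype.prod_erase_some,
      ← residue_eq_poleResidue x i (hpm_ne i).1 (hpm_ne i).2]
    simp only [y, w, Option.elim, sub_neg_eq_add]
  have hsum : ∑ j, y j - ∑ j, w j = 2 * r + 1 / 2 := by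
    simp [y, w, Fintype.sum_option, sum_sub_distrib]
    ring
  rw [Fintype.sum_option, hnone, sum_congr rfl fun i _ => hsome i, hsum,
    Fintype.sum_sum_type] at key
  simp only [plusMinus, Sum.elim, id] at key
  linarith

theorem sum_poleResidue_of_eq_half (hx : Injective x) (hpos : ∀ k, 0 < x k) {L : Fin r}
    (hL : x L = 1 / 2) :
    ∑ k, poleResidue x k (x k) + ∑ k ∈ univ.erase L, poleResidue x k (-x k) = 2 * r + 1 := by
  have hpm := plusMinus_injective hx hpos
  -- The zero `x L - 1 = -1/2` of the numerator cancels the factor `z + 1/2`, leaving `-1` as the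
  -- extra zero and a single pole at `-1/2 = -x L`, whose residue is computed by hand.
  set w := update (fun i => plusMinus x i - 1) (Sum.inl L) (-1)
  have key := sum_prod_sub_div_prod_erase_sub hpm w
  have hroots : ∀ t, ∏ j, (t - w j) =
      (t + 1) * ∏ j ∈ univ.erase (Sum.inl L), (t - (plusMinus x j - 1)) := fun t => by
    rw [prod_sub_update, sub_neg_eq_add]
  have hspecial : (∏ j, (plusMinus x (Sum.inr L) - w j)) /
      ∏ j ∈ univ.erase (Sum.inr L), (plusMinus x (Sum.inr L) - plusMinus x j) = -(1 / 2) := by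
    rw [hroots, div_eq_iff (prod_erase_sub_ne_zero hpm _)]
    simp only [plusMinus, Sum.elim_inl, Sum.elim_inr, Fintype.prod_erase_inl,
      Fintype.prod_erase_inr]
    rw [← mul_prod_erase univ (fun j => -x L - (-x j - 1)) (mem_univ L),
      ← mul_prod_erase univ (fun j => -x L - x j) (mem_univ L), hL]
    have hPQ : (∏ j ∈ univ.erase L, (-(1 / 2) - (x j - 1))) *
          ∏ j ∈ univ.erase L, (-(1 / 2) - (-x j - 1)) =
        (∏ j ∈ univ.erase L, (-(1 / 2) - x j)) * ∏ j ∈ univ.erase L, (-(1 / 2) - -x j) := by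
      rw [← prod_mul_distrib, ← prod_mul_distrib]
      exact prod_congr rfl fun j _ => by ring
    linear_combination (1 / 2 : ℝ) * hPQ
  have hregular : ∀ i ≠ Sum.inr L, (∏ j, (plusMinus x i - w j)) /
      ∏ j ∈ univ.erase i, (plusMinus x i - plusMinus x j) =
        poleResidue x (i.elim id id) (plusMinus x i) := by
    intro i hi
    have h0 : plusMinus x i ≠ 0 := by
      rcases i with k | k <;> simp only [plusMinus, Sum.elim_inl, Sum.elim_inr] <;>
        linarith [hpos k]
    have h1 : 2 * plusMinus x i + 1 ≠ 0 := by
      rcases i with k | k <;> simp only [plusMinus, Sum.elim_inl, Sum.elim_inr]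
      · linarith [hpos k]
      · have hkL : k ≠ L := fun h => hi (h ▸ rfl)
        have : x k ≠ 1 / 2 := hL ▸ hx.ne hkL
        contrapose! this
        linarith
    have h2 : plusMinus x i + 1 / 2 ≠ 0 := by contrapose! h1; linarith
    have hL' : plusMinus x (Sum.inl L) = 1 / 2 := hL
    rw [hroots, ← residue_eq_poleResidue x i h0 h1,
      ← mul_prod_erase univ (fun j => plusMinus x i - (plusMinus x j - 1))
        (mem_univ (Sum.inl L)),
      hL', show plusMinus x i - (1 / 2 - 1) = plusMinus x i + 1 / 2 by ring, mul_left_comm,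
      mul_div_mul_left _ _ h2]
  have hsum : ∑ j, plusMinus x j - ∑ j, w j = 2 * r + 1 / 2 := by
    rw [sum_update_of_mem (mem_univ _), sdiff_singleton_eq_erase, sum_erase_eq_sub (mem_univ _)]
    simp [plusMinus, Fintype.sum_sum_type, sum_sub_distrib, hL]
    ring
  rw [← add_sum_erase _ _ (mem_univ (Sum.inr L)), hspecial,
    sum_congr rfl fun i hi => hregular i (ne_of_mem_erase hi), hsum,
    Fintype.sum_erase_inr] at key
  simp only [plusMinus, Sum.elim, id] at key
  linarith

end ResidueSums

section Ccoef

variable {r : ℕ} {m : Fin r → ℤ} {L : Fin r}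

theorem sum_Acoef_add_sum_Bcoef_of_one_le (hm : Dominant m) (hL : (L : ℕ) + 1 = r)
    (hmL : 1 ≤ m L) :
    ∑ k, Acoef r 2 2 0 m k + ∑ k, Bcoef r 2 2 0 m k = 2 * r / (2 * r + 1) := by
  have hr : r ≠ 0 := by omega
  have hmL' : (1 : ℝ) ≤ m L := by exact_mod_cast hmL
  have hlarge : ∀ k, 3 / 2 ≤ shiftedWeight m k := fun k => by
    rcases eq_or_ne k L with rfl | hk
    · rw [shiftedWeight_last hL]; linarith
    · linarith [shiftedWeight_last_add_one_le hm hL hk, shiftedWeight_last (m := m) hL]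
  rw [sum_congr rfl fun k _ => Acoef_eq_poleResidue hr m k (by linarith [hlarge k]),
    sum_congr rfl fun k _ => Bcoef_eq_poleResidue hr m k (by linarith [hlarge k]),
    ← sum_div, ← sum_div, ← add_div,
    sum_poleResidue_of_ne_half (shiftedWeight_strictAnti hm).injective
      (fun k => by linarith [hlarge k]) (fun k => by linarith [hlarge k])]

theorem sum_Acoef_add_sum_erase_Bcoef_of_eq_zero (hm : Dominant m) (hL : (L : ℕ) + 1 = r)
    (hmL : m L = 0) :
    ∑ k, Acoef r 2 2 0 m k + ∑ k ∈ univ.erase L, Bcoef r 2 2 0 m k = 1 := by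
  have hr : r ≠ 0 := by omega
  have hxL : shiftedWeight m L = 1 / 2 := by rw [shiftedWeight_last hL, hmL]; simp
  have hpos : ∀ k, 1 / 2 ≤ shiftedWeight m k := fun k => by
    rcases eq_or_ne k L with rfl | hk
    · rw [hxL]
    · linarith [shiftedWeight_last_add_one_le hm hL hk]
  rw [sum_congr rfl fun k _ => Acoef_eq_poleResidue hr m k (by linarith [hpos k]),
    sum_congr rfl fun k hk => Bcoef_eq_poleResidue hr m k
      (by linarith [shiftedWeight_last_add_one_le hm hL (ne_of_mem_erase hk)]),
    ← sum_div, ← sum_div, ← add_div,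
    sum_poleResidue_of_eq_half (shiftedWeight_strictAnti hm).injective
      (fun k => by linarith [hpos k]) hxL, div_self (by positivity)]

theorem Ccoef_eq_of_one_le (hm : Dominant m) (hL : (L : ℕ) + 1 = r) (hmL : 1 ≤ m L) :
    Ccoef r 2 2 0 m = 1 / (2 * r + 1) := by
  rw [Ccoef, sum_filter_dominant_Acoef hm, sum_filter_dominant_Bcoef_of_one_le hm hL hmL,
    sub_sub, sum_Acoef_add_sum_Bcoef_of_one_le hm hL hmL]
  field_simp
  ring

theorem Ccoef_eq_zero_of_eq_zero (hm : Dominant m) (hL : (L : ℕ) + 1 = r) (hmL : m L = 0) :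
    Ccoef r 2 2 0 m = 0 := by
  rw [Ccoef, sum_filter_dominant_Acoef hm, sum_filter_dominant_Bcoef_of_eq_zero hm hL hmL,
    sub_sub, sum_Acoef_add_sum_erase_Bcoef_of_eq_zero hm hL hmL, sub_self]

end Ccoef

theorem Cm_so_split (r : ℕ) (hr : 1 < r) (m : Fin r → ℤ) (hm : Dominant m) :
    (1 ≤ m ⟨r - 1, by omega⟩ → Ccoef r 2 2 0 m = 1 / (2 * (r : ℝ) + 1)) ∧
      (m ⟨r - 1, by omega⟩ = 0 → Ccoef r 2 2 0 m = 0) ∧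
      (Ccoef r 2 2 0 m = 0 ↔ m ⟨r - 1, by omega⟩ = 0) := by
  have hL : ((⟨r - 1, by omega⟩ : Fin r) : ℕ) + 1 = r := by simp only; omega
  refine ⟨Ccoef_eq_of_one_le hm hL, Ccoef_eq_zero_of_eq_zero hm hL, fun hC => ?_,
    Ccoef_eq_zero_of_eq_zero hm hL⟩
  by_contra hmL
  rw [Ccoef_eq_of_one_le hm hL (by have := hm.2 ⟨r - 1, by omega⟩; omega)] at hC
  have : (0 : ℝ) < 1 / (2 * r + 1) := by positivity
  linarith
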